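/- Let ρ be a real-valued C² function on an open subset of ℂⁿ × ℂᵐ and let w be a point where the fiberwise complex Hessian (ρ_{p q̄}(w)) is invertible and ρ(w) − |∂ρ|²(w) ≠ 0. Then for every 1 ≤ j ≤ n one has ρ_j(w) + Σ_p ν_j^p(w)ρ_p(w) = ρ(w)·(ρ_j(w) − Σ_q ρ_{j q̄}(w)ρ^q(w))/(ρ(w) − |∂ρ|²(w)). In particular, at every such point where in addition ρ(w) = 0, the (1,0) vector field V_j := ∂/∂t_j + Σ_p ν_j^p ∂/∂z_p satisfies V_j(ρ)(w) = 0; that is, V_j is tangent to the level set {ρ = 0}. -/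

import Mathlib

open MeasureTheory Complex
open scoped ComplexOrder

noncomputable section

/-- `ℂⁿ` with the Euclidean metric. -/
abbrev CC (n : ℕ) := EuclideanSpace ℂ (Fin n)

/-- `ℂⁿ × ℂᵐ`. -/
abbrev Pt (n m : ℕ) := CC n × CC m

instance (n : ℕ) : MeasurableSpace (CC n) := borel _
instance (n : ℕ) : BorelSpace (CC n) := ⟨rfl⟩
instance (n : ℕ) : InnerProductSpace ℝ (CC n) := InnerProductSpace.rclikeToReal ℂ (CC n)

/-- The Wirtinger derivative `∂f/∂v` of `f` at `x` in the (complex) direction `v`. -/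
def wdz {E : Type*} [NormedAddCommGroup E] [NormedSpace ℂ E]
    (f : E → ℂ) (x v : E) : ℂ :=
  (1 / 2 : ℂ) * ((fderiv ℝ f x) v - Complex.I * (fderiv ℝ f x) (Complex.I • v))

/-- The conjugate Wirtinger derivative `∂f/∂v̄`. -/
def wdzbar {E : Type*} [NormedAddCommGroup E] [NormedSpace ℂ E]
    (f : E → ℂ) (x v : E) : ℂ :=
  (1 / 2 : ℂ) * ((fderiv ℝ f x) v + Complex.I * (fderiv ℝ f x) (Complex.I • v))

/-- The Levi form `Σ f_{a b̄} v_a v̄_b` of `f` at `x` evaluated at the direction `v`. -/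
def levi {E : Type*} [NormedAddCommGroup E] [NormedSpace ℂ E]
    (f : E → ℂ) (x v : E) : ℂ :=
  wdz (fun y => wdzbar f y v) x v

/-- `t`-coordinate direction in `ℂⁿ × ℂᵐ`. -/
def et {n m : ℕ} (j : Fin n) : Pt n m := (EuclideanSpace.single j 1, 0)

/-- `z`-coordinate direction in `ℂⁿ × ℂᵐ`. -/
def ez {n m : ℕ} (p : Fin m) : Pt n m := (0, EuclideanSpace.single p 1)

/-- A real-valued function viewed as a complex-valued one. -/
def rc {E : Type*} (ρ : E → ℝ) : E → ℂ := fun w => (ρ w : ℂ)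

/-- `ρ_j := ∂ρ/∂t_j`. -/
def Dt {n m : ℕ} (ρ : Pt n m → ℝ) (j : Fin n) (w : Pt n m) : ℂ := wdz (rc ρ) w (et j)

/-- `ρ_{k̄} := ∂ρ/∂t̄_k`. -/
def Dtbar {n m : ℕ} (ρ : Pt n m → ℝ) (k : Fin n) (w : Pt n m) : ℂ := wdzbar (rc ρ) w (et k)

/-- `ρ_p := ∂ρ/∂z_p`. -/
def Dz {n m : ℕ} (ρ : Pt n m → ℝ) (p : Fin m) (w : Pt n m) : ℂ := wdz (rc ρ) w (ez p)

/-- `ρ_{p̄} := ∂ρ/∂z̄_p`. -/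
def Dzbar {n m : ℕ} (ρ : Pt n m → ℝ) (p : Fin m) (w : Pt n m) : ℂ := wdzbar (rc ρ) w (ez p)

/-- `ρ_{j k̄} := ∂²ρ/∂t_j∂t̄_k`. -/
def Dttbar {n m : ℕ} (ρ : Pt n m → ℝ) (j k : Fin n) (w : Pt n m) : ℂ :=
  wdz (fun x => wdzbar (rc ρ) x (et k)) w (et j)

/-- `ρ_{j q̄} := ∂²ρ/∂t_j∂z̄_q`. -/
def Dtzbar {n m : ℕ} (ρ : Pt n m → ℝ) (j : Fin n) (q : Fin m) (w : Pt n m) : ℂ :=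
  wdz (fun x => wdzbar (rc ρ) x (ez q)) w (et j)

/-- `ρ_{p q̄} := ∂²ρ/∂z_p∂z̄_q`, the fiberwise complex Hessian. -/
def Dzzbar {n m : ℕ} (ρ : Pt n m → ℝ) (p q : Fin m) (w : Pt n m) : ℂ :=
  wdz (fun x => wdzbar (rc ρ) x (ez q)) w (ez p)

/-- The fiberwise complex Hessian matrix `(ρ_{p q̄})`. -/
def fibHess {n m : ℕ} (ρ : Pt n m → ℝ) (w : Pt n m) : Matrix (Fin m) (Fin m) ℂ :=
  Matrix.of fun p q => Dzzbar ρ p q w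

/-- The inverse matrix `(ρ^{p q̄})` of the fiberwise complex Hessian. -/
def fibHessInv {n m : ℕ} (ρ : Pt n m → ℝ) (w : Pt n m) : Matrix (Fin m) (Fin m) ℂ :=
  (fibHess ρ w)⁻¹

/-- `ρ^p := Σ_q ρ^{p q̄} ρ_q`. -/
def rup {n m : ℕ} (ρ : Pt n m → ℝ) (p : Fin m) (w : Pt n m) : ℂ :=
  ∑ q, fibHessInv ρ w p q * Dz ρ q w

/-- `|∂ρ|² := Σ_p ρ_{p̄} ρ^p`. -/
def dnorm2 {n m : ℕ} (ρ : Pt n m → ℝ) (w : Pt n m) : ℂ :=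
  ∑ p, Dzbar ρ p w * rup ρ p w

/-- The vector field coefficients `ν_j^p`. -/
def nu {n m : ℕ} (ρ : Pt n m → ℝ) (j : Fin n) (p : Fin m) (w : Pt n m) : ℂ :=
  Dt ρ j w * (starRingEnd ℂ) (rup ρ p w) / ((ρ w : ℂ) - dnorm2 ρ w)
    - ∑ q, (Dtzbar ρ j q w * fibHessInv ρ w q p
        + Dtzbar ρ j q w * rup ρ q w * (starRingEnd ℂ) (rup ρ p w) / ((ρ w : ℂ) - dnorm2 ρ w))

/-- The fiber of `Ω` over `t`. -/
def fib {n m : ℕ} (Ω : Set (Pt n m)) (t : CC n) : Set (CC m) := {z | (t, z) ∈ Ω}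

/-- A family of bounded domains over a domain `U ⊂ ℂⁿ`. -/
structure IsFamilyOfBddDomains {n m : ℕ} (U : Set (CC n)) (Ω : Set (Pt n m)) : Prop where
  isOpen_base : IsOpen U
  isConnected_base : IsConnected U
  isOpen_total : IsOpen Ω
  isConnected_total : IsConnected Ω
  proj_mem : ∀ w ∈ Ω, w.1 ∈ U
  proj_surj : ∀ t ∈ U, ∃ z, (t, z) ∈ Ω
  bounded_fib : ∀ t ∈ U, Bornology.IsBounded (fib Ω t)

/-- `ρ` is a `C^k` (boundary) defining function of the family `Ω`. -/
structure IsDefiningFunction {n m : ℕ} (U : Set (CC n)) (Ω : Set (Pt n m))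
    (ρ : Pt n m → ℝ) (k : ℕ) : Prop where
  contDiff : ContDiff ℝ k ρ
  eq_sublevel : Ω = {w : Pt n m | w.1 ∈ U ∧ ρ w < 0}
  grad_ne : ∀ t ∈ U, ∀ z ∈ frontier (fib Ω t), fderiv ℝ (fun z' => ρ (t, z')) z ≠ 0

/-- `Ω` has the plurisubharmonic defining function `ρ`: `ρ` is a `C⁴` defining function,
plurisubharmonic on a neighborhood of the closure of `Ω`, and `ρ(t,·)` is strictly
plurisubharmonic on the closure of each fiber. -/
structure IsPshDefining {n m : ℕ} (U : Set (CC n)) (Ω : Set (Pt n m))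
    (ρ : Pt n m → ℝ) : Prop where
  defining : IsDefiningFunction U Ω ρ 4
  psh_nhd : ∃ W, IsOpen W ∧ closure Ω ⊆ W ∧ ∀ w ∈ W, ∀ v : Pt n m, 0 ≤ levi (rc ρ) w v
  fib_strict : ∀ t ∈ U, ∀ z ∈ closure (fib Ω t), ∀ v : CC m, v ≠ 0 →
    0 < levi (fun z' => (ρ (t, z') : ℂ)) z v

/-- `ρ` exhibits `Ω` as a strictly pseudoconvex family: `ρ` is a `C⁴` defining function which is
strictly plurisubharmonic on a neighborhood of the closure of `Ω`. -/
structure IsSPCDefining {n m : ℕ} (U : Set (CC n)) (Ω : Set (Pt n m))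
    (ρ : Pt n m → ℝ) : Prop where
  defining : IsDefiningFunction U Ω ρ 4
  strict_psh_nhd : ∃ W, IsOpen W ∧ closure Ω ⊆ W ∧
    ∀ w ∈ W, ∀ v : Pt n m, v ≠ 0 → 0 < levi (rc ρ) w v

/-- Chern connection coefficient matrix `Γ_a = (Γ_{aλ}^μ)` of a metric `h` in the
direction `a`; it is determined by `Σ_μ Γ_{aλ}^μ h_{μ ν̄} = ∂h_{λ ν̄}/∂w_a`. -/
def Gam {E : Type*} [NormedAddCommGroup E] [NormedSpace ℂ E] {r : ℕ}
    (h : E → Matrix (Fin r) (Fin r) ℂ) (a w : E) : Matrix (Fin r) (Fin r) ℂ :=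
  (Matrix.of fun l ν => wdz (fun x => h x l ν) w a) * (h w)⁻¹

/-- Curvature coefficients `A_{abλμ} = Σ_α (−∂Γ_{aλ}^α/∂w̄_b) h_{α μ̄}`. -/
def curvA {E : Type*} [NormedAddCommGroup E] [NormedSpace ℂ E] {r : ℕ}
    (h : E → Matrix (Fin r) (Fin r) ℂ) (a b w : E) : Matrix (Fin r) (Fin r) ℂ :=
  (Matrix.of fun l α => - wdzbar (fun x => Gam h a x l α) w b) * (h w)

/-- Nakano (semi-)positivity at a point, with respect to the directions `e`. -/
def NakanoPosAt {E : Type*} [NormedAddCommGroup E] [NormedSpace ℂ E] {r : ℕ}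
    {ι : Type*} [Fintype ι] (h : E → Matrix (Fin r) (Fin r) ℂ) (e : ι → E) (w : E) : Prop :=
  ∀ u : ι → Fin r → ℂ,
    0 ≤ ∑ a, ∑ b, ∑ l, ∑ μ, curvA h (e a) (e b) w l μ * u a l * (starRingEnd ℂ) (u b μ)

/-- Nakano strict positivity at a point, with respect to the directions `e`. -/
def NakanoStrictPosAt {E : Type*} [NormedAddCommGroup E] [NormedSpace ℂ E] {r : ℕ}
    {ι : Type*} [Fintype ι] (h : E → Matrix (Fin r) (Fin r) ℂ) (e : ι → E) (w : E) : Prop :=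
  ∀ u : ι → Fin r → ℂ, u ≠ 0 →
    0 < ∑ a, ∑ b, ∑ l, ∑ μ, curvA h (e a) (e b) w l μ * u a l * (starRingEnd ℂ) (u b μ)

/-- All coordinate directions of `ℂⁿ × ℂᵐ`. -/
def dirTZ {n m : ℕ} : Fin n ⊕ Fin m → Pt n m := Sum.elim et ez

/-- The pointwise inner product `⟨a,b⟩_h = Σ_{λ,μ} a_λ \overline{b_μ} h_{λ μ̄}`. -/
def hInner {r : ℕ} (H : Matrix (Fin r) (Fin r) ℂ) (a b : Fin r → ℂ) : ℂ :=
  ∑ l, ∑ μ, a l * (starRingEnd ℂ) (b μ) * H l μ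

/-- The Chern covariant derivative `(D_a u)_α = ∂u_α/∂a + Σ_λ Γ_{aλ}^α u_λ`. -/
def covD {E : Type*} [NormedAddCommGroup E] [NormedSpace ℂ E] {r : ℕ}
    (h : E → Matrix (Fin r) (Fin r) ℂ) (a : E) (u : E → Fin r → ℂ) (w : E) (α : Fin r) : ℂ :=
  wdz (fun x => u x α) w a + ∑ l, Gam h a w l α * u w l

/-- The operator `L_j u := D^F_{t_j} u + Σ_p D^F_{z_p}(ν_j^p u)`. -/
def Lop {n m r : ℕ} (h : Pt n m → Matrix (Fin r) (Fin r) ℂ) (ρ : Pt n m → ℝ) (j : Fin n)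
    (u : Pt n m → Fin r → ℂ) (w : Pt n m) (α : Fin r) : ℂ :=
  covD h (et j) u w α + ∑ p, covD h (ez p) (fun x β => nu ρ j p x * u x β) w α

/-- `H(h^F)_{jkλμ}`. -/
def Hcoef {n m r : ℕ} (h : Pt n m → Matrix (Fin r) (Fin r) ℂ) (ρ : Pt n m → ℝ)
    (j k : Fin n) (l μ : Fin r) (w : Pt n m) : ℂ :=
  curvA h (et j) (et k) w l μ + ∑ p, nu ρ j p w * curvA h (ez p) (et k) w l μ
    + ∑ q, (starRingEnd ℂ) (nu ρ k q w) * curvA h (et j) (ez q) w l μ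
    + ∑ p, ∑ q, nu ρ j p w * (starRingEnd ℂ) (nu ρ k q w) * curvA h (ez p) (ez q) w l μ

/-- `H₀(ρ)_{j k̄} := ρ_{j k̄} − Σ_{p,s} ρ_{j s̄} ρ^{s p̄} \overline{ρ_{k p̄}}`. -/
def H0 {n m : ℕ} (ρ : Pt n m → ℝ) (j k : Fin n) (w : Pt n m) : ℂ :=
  Dttbar ρ j k w - ∑ p, ∑ s, Dtzbar ρ j s w * fibHessInv ρ w s p * (starRingEnd ℂ) (Dtzbar ρ k p w)

/-- `H(ρ)_{j k̄}`. -/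
def Hrho {n m : ℕ} (ρ : Pt n m → ℝ) (j k : Fin n) (w : Pt n m) : ℂ :=
  H0 ρ j k w +
    (Dt ρ j w - ∑ s, Dtzbar ρ j s w * rup ρ s w) *
      (Dtbar ρ k w - ∑ p, (starRingEnd ℂ) (Dtzbar ρ k p w) * (starRingEnd ℂ) (rup ρ p w)) /
        dnorm2 ρ w

/-- `w` is the projection `π_⊥ g` of `g` onto the orthogonal complement of the space of
square-integrable fiberwise holomorphic `ℂ^r`-valued functions in the weighted `L²`-space
of the fiber `Ω_t`. -/
def IsPerpProj {n m r : ℕ} (h : Pt n m → Matrix (Fin r) (Fin r) ℂ) (Ω : Set (Pt n m))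
    (t : CC n) (g w : CC m → Fin r → ℂ) : Prop :=
  (∀ l, DifferentiableOn ℂ (fun z => g z l - w z l) (fib Ω t)) ∧
  (∀ l, MemLp (fun z => g z l - w z l) 2 (volume.restrict (fib Ω t))) ∧
  (∀ l, MemLp (fun z => w z l) 2 (volume.restrict (fib Ω t))) ∧
  (∀ f : CC m → Fin r → ℂ, (∀ l, DifferentiableOn ℂ (fun z => f z l) (fib Ω t)) →
    (∀ l, MemLp (fun z => f z l) 2 (volume.restrict (fib Ω t))) →
    ∫ z in fib Ω t, hInner (h (t, z)) (w z) (f z) = 0)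

/-- Plurisubharmonicity (upper semicontinuity plus the sub-mean value inequality on
complex discs) of a real-valued function on a set. -/
def IsPshOn {E : Type*} [NormedAddCommGroup E] [NormedSpace ℂ E]
    (f : E → ℝ) (s : Set E) : Prop :=
  UpperSemicontinuousOn f s ∧
  ∀ (a v : E) (R : ℝ), 0 < R → (∀ c : ℂ, ‖c‖ ≤ R → a + c • v ∈ s) →
    f a ≤ (1 / (2 * Real.pi)) *
      ∫ θ in (0:ℝ)..(2 * Real.pi), f (a + ((R : ℂ) * Complex.exp (θ * Complex.I)) • v)



/-! Expanding `ν_j^p` and using `Σ_p ρ^{q p̄} ρ_p = ρ^q`, the sum `Σ_p ν_j^p ρ_p` collapses to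
`(ρ_j − Σ_q ρ_{j q̄} ρ^q) · S/(ρ − |∂ρ|²) − Σ_q ρ_{j q̄} ρ^q` with `S = Σ_p \overline{ρ^p} ρ_p`.
Since `ρ` is real and `C²`, its fiberwise complex Hessian is Hermitian (symmetry of the real
Hessian), hence so is `(ρ^{p q̄})`, and `S = |∂ρ|²`; adding `ρ_j` gives the formula. -/

section RealValued

variable {E : Type*} [NormedAddCommGroup E] [NormedSpace ℂ E] {ρ : E → ℝ} {x : E}

lemma fderiv_rc (hρ : DifferentiableAt ℝ ρ x) :
    fderiv ℝ (rc ρ) x = Complex.ofRealCLM.comp (fderiv ℝ ρ x) :=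
  (Complex.ofRealCLM.hasFDerivAt.comp x hρ.hasFDerivAt).fderiv

lemma conj_wdz_rc (hρ : DifferentiableAt ℝ ρ x) (v : E) :
    (starRingEnd ℂ) (wdz (rc ρ) x v) = wdzbar (rc ρ) x v := by
  simp only [wdz, wdzbar, fderiv_rc hρ, ContinuousLinearMap.coe_comp, Function.comp_apply,
    Complex.ofRealCLM_apply, map_mul, map_sub, map_div₀, map_one, map_ofNat,
    Complex.conj_ofReal, Complex.conj_I]
  ring

lemma wdz_wdzbar_rc (hρ : ContDiffAt ℝ 2 ρ x) (u v : E) :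
    wdz (fun y => wdzbar (rc ρ) y u) x v =
      (1 / 4 : ℂ) * ((fderiv ℝ (fderiv ℝ ρ) x v u + fderiv ℝ (fderiv ℝ ρ) x (I • v) (I • u) : ℝ)
        + I * (fderiv ℝ (fderiv ℝ ρ) x v (I • u) - fderiv ℝ (fderiv ℝ ρ) x (I • v) u : ℝ)) := by
  set D2 := fderiv ℝ (fderiv ℝ ρ) x
  have hD2 : HasFDerivAt (fderiv ℝ ρ) D2 x :=
    ((hρ.fderiv_right (m := 1) (by norm_num)).differentiableAt (by norm_num)).hasFDerivAt
  have hcoord (a : E) : HasFDerivAt (fun y => ((fderiv ℝ ρ y a : ℝ) : ℂ))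
      (Complex.ofRealCLM.comp ((ContinuousLinearMap.apply ℝ ℝ a).comp D2)) x :=
    Complex.ofRealCLM.hasFDerivAt.comp x
      ((ContinuousLinearMap.apply ℝ ℝ a).hasFDerivAt.comp x hD2)
  have heq : (fun y => wdzbar (rc ρ) y u) =ᶠ[nhds x]
      fun y => (1 / 2 : ℂ) * ((fderiv ℝ ρ y u : ℂ) + I * (fderiv ℝ ρ y (I • u) : ℂ)) := by
    filter_upwards [hρ.eventually (by simp)] with y hy
    simp [wdzbar, fderiv_rc (hy.differentiableAt (by norm_num))]
  have hderiv : HasFDerivAt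
      (fun y => (1 / 2 : ℂ) * ((fderiv ℝ ρ y u : ℂ) + I * (fderiv ℝ ρ y (I • u) : ℂ)))
      ((1 / 2 : ℂ) • (Complex.ofRealCLM.comp ((ContinuousLinearMap.apply ℝ ℝ u).comp D2)
        + I • Complex.ofRealCLM.comp ((ContinuousLinearMap.apply ℝ ℝ (I • u)).comp D2))) x :=
    ((hcoord u).add ((hcoord (I • u)).const_mul I)).const_mul (1 / 2 : ℂ)
  rw [wdz, heq.fderiv_eq, hderiv.fderiv]
  simp only [smul_apply, add_apply, ContinuousLinearMap.coe_comp, Function.comp_apply,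
    Complex.ofRealCLM_apply, ContinuousLinearMap.apply_apply, smul_eq_mul]
  push_cast
  linear_combination (-(1 / 4) * (D2 (I • v) (I • u) : ℂ)) * I_sq

lemma conj_wdz_wdzbar_rc (hρ : ContDiffAt ℝ 2 ρ x) (u v : E) :
    (starRingEnd ℂ) (wdz (fun y => wdzbar (rc ρ) y u) x v) =
      wdz (fun y => wdzbar (rc ρ) y v) x u := by
  have hsym := hρ.isSymmSndFDerivAt (by simp)
  simp only [wdz_wdzbar_rc hρ, hsym.eq v u, hsym.eq (I • v) (I • u), hsym.eq v (I • u),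
    hsym.eq (I • v) u, map_mul, map_add, map_div₀, map_one, map_ofNat, Complex.conj_ofReal,
    Complex.conj_I]
  push_cast
  ring

end RealValued

section Coordinates

open scoped Matrix

variable {n m : ℕ} {ρ : Pt n m → ℝ} {w : Pt n m}

lemma fibHess_isHermitian (hρ : ContDiffAt ℝ 2 ρ w) : (fibHess ρ w).IsHermitian := by
  ext p q
  exact conj_wdz_wdzbar_rc hρ (ez p) (ez q)

lemma sum_conj_rup_mul_Dz (hρ : ContDiffAt ℝ 2 ρ w) :
    ∑ p, (starRingEnd ℂ) (rup ρ p w) * Dz ρ p w = dnorm2 ρ w := by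
  have hrup : (fun p => rup ρ p w) = fibHessInv ρ w *ᵥ fun q => Dz ρ q w := rfl
  have hDzbar : (fun p => Dzbar ρ p w) = star fun p => Dz ρ p w :=
    funext fun p => (conj_wdz_rc (hρ.differentiableAt (by norm_num)) (ez p)).symm
  have hInv : (fibHessInv ρ w)ᴴ = fibHessInv ρ w := (fibHess_isHermitian hρ).inv
  change star (fun p => rup ρ p w) ⬝ᵥ (fun p => Dz ρ p w) =
    (fun p => Dzbar ρ p w) ⬝ᵥ fun p => rup ρ p w
  rw [hrup, hDzbar, Matrix.star_mulVec, ← Matrix.dotProduct_mulVec, hInv]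

lemma nu_eq (j : Fin n) (p : Fin m) :
    nu ρ j p w = (Dt ρ j w - ∑ q, Dtzbar ρ j q w * rup ρ q w) * (starRingEnd ℂ) (rup ρ p w)
        / ((ρ w : ℂ) - dnorm2 ρ w) - ∑ q, Dtzbar ρ j q w * fibHessInv ρ w q p := by
  simp only [nu, Finset.sum_add_distrib, ← Finset.sum_div, ← Finset.sum_mul]
  ring

lemma sum_nu_mul_Dz (j : Fin n) :
    ∑ p, nu ρ j p w * Dz ρ p w =
      (Dt ρ j w - ∑ q, Dtzbar ρ j q w * rup ρ q w)
          * (∑ p, (starRingEnd ℂ) (rup ρ p w) * Dz ρ p w) / ((ρ w : ℂ) - dnorm2 ρ w)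
        - ∑ q, Dtzbar ρ j q w * rup ρ q w := by
  simp only [nu_eq]
  set X := Dt ρ j w - ∑ q, Dtzbar ρ j q w * rup ρ q w
  simp only [sub_mul, Finset.sum_sub_distrib]
  congr 1
  · rw [Finset.mul_sum, Finset.sum_div]
    exact Finset.sum_congr rfl fun p _ => by ring
  · simp only [rup, Finset.sum_mul, Finset.mul_sum, mul_assoc]
    exact Finset.sum_comm

end Coordinates

theorem Vj_tangent_to_level_set_general {n m : ℕ} (s : Set (Pt n m)) (hs : IsOpen s)
    (ρ : Pt n m → ℝ) (hρ : ContDiffOn ℝ 2 ρ s) (w : Pt n m) (hw : w ∈ s)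
    (hne : (ρ w : ℂ) - dnorm2 ρ w ≠ 0) :
    (∀ j : Fin n, Dt ρ j w + ∑ p, nu ρ j p w * Dz ρ p w
      = (ρ w : ℂ) * (Dt ρ j w - ∑ q, Dtzbar ρ j q w * rup ρ q w)
          / ((ρ w : ℂ) - dnorm2 ρ w)) ∧
    (ρ w = 0 → ∀ j : Fin n, Dt ρ j w + ∑ p, nu ρ j p w * Dz ρ p w = 0) := by
  have hρw : ContDiffAt ℝ 2 ρ w := hρ.contDiffAt (hs.mem_nhds hw)
  have hV : ∀ j : Fin n, Dt ρ j w + ∑ p, nu ρ j p w * Dz ρ p w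
      = (ρ w : ℂ) * (Dt ρ j w - ∑ q, Dtzbar ρ j q w * rup ρ q w)
          / ((ρ w : ℂ) - dnorm2 ρ w) := by
    intro j
    rw [sum_nu_mul_Dz, sum_conj_rup_mul_Dz hρw]
    field_simp
    ring
  refine ⟨hV, fun hρ0 j => ?_⟩
  rw [hV, hρ0, Complex.ofReal_zero, zero_mul, zero_div]

/-- Let `ρ` be a real-valued `C²` function on an open subset of `ℂⁿ × ℂᵐ`
and `w` a point where the fiberwise complex Hessian is invertible and `ρ(w) − |∂ρ|²(w) ≠ 0`.
Then `ρ_j + Σ_p ν_j^p ρ_p = ρ·(ρ_j − Σ_q ρ_{j q̄} ρ^q)/(ρ − |∂ρ|²)` at `w`; in particular, if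
moreover `ρ(w) = 0` then `V_j(ρ)(w) = ρ_j(w) + Σ_p ν_j^p(w) ρ_p(w) = 0`, i.e. the field
`V_j = ∂/∂t_j + Σ_p ν_j^p ∂/∂z_p` is tangent to the level set `{ρ = 0}`. -/
theorem Vj_tangent_to_level_set {n m : ℕ} (s : Set (Pt n m)) (hs : IsOpen s)
    (ρ : Pt n m → ℝ) (hρ : ContDiffOn ℝ 2 ρ s) (w : Pt n m) (hw : w ∈ s)
    (hinv : IsUnit (fibHess ρ w).det)
    (hne : (ρ w : ℂ) - dnorm2 ρ w ≠ 0) :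
    (∀ j : Fin n, Dt ρ j w + ∑ p, nu ρ j p w * Dz ρ p w
      = (ρ w : ℂ) * (Dt ρ j w - ∑ q, Dtzbar ρ j q w * rup ρ q w)
          / ((ρ w : ℂ) - dnorm2 ρ w)) ∧
    (ρ w = 0 → ∀ j : Fin n, Dt ρ j w + ∑ p, nu ρ j p w * Dz ρ p w = 0) :=
  Vj_tangent_to_level_set_general s hs ρ hρ w hw hne

end
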